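/- arXiv:1411.0137 — 2 statements merged into one kernel-verified Lean document; each statement's English description precedes it below -/
import Mathlib

section
/- Suppose the volume function $r\mapsto v(x_0,r)$ is nondecreasing, continuous and positive, and that for some $p_2>0$ one has $\int_{r_0}^\infty v(x_0,s)^{-1/p_2}\,ds<\infty$. Then there exists a constant $C>0$ such that $v(x_0,t)\ge C\,t^{p_2}$ for all $t>r_0$. -/
open MeasureTheory Set

/-- If the volume function `r ↦ v(x₀, r)` is positive, continuous and nondecreasing on
`[r₀, ∞)` and `∫_{r₀}^∞ v(x₀,s)^{-1/p₂} ds < ∞` for some `p₂ > 0`, then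
`v(x₀, t) ≥ C t^{p₂}` for all `t > r₀`. -/
theorem stmt_3 (r₀ : ℝ) (hr₀ : 0 < r₀) (v : ℝ → ℝ)
    (hpos : ∀ r ∈ Ici r₀, 0 < v r)
    (hcont : ContinuousOn v (Ici r₀))
    (hmono : MonotoneOn v (Ici r₀))
    (p₂ : ℝ) (hp₂ : 0 < p₂)
    (hint : IntegrableOn (fun s => (v s) ^ (-(1 / p₂))) (Ici r₀)) :
    ∃ C : ℝ, 0 < C ∧ ∀ t : ℝ, r₀ < t → C * t ^ p₂ ≤ v t := by
  set f : ℝ → ℝ := fun s => (v s) ^ (-(1 / p₂)) with hf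
  set I : ℝ := ∫ s in Ici r₀, f s with hI
  have hnonneg : 0 ≤ᶠ[ae (volume.restrict (Ici r₀))] f := by
    filter_upwards [ae_restrict_mem measurableSet_Ici] with s hs
    exact (Real.rpow_pos_of_pos (hpos s hs) _).le
  have key : ∀ t : ℝ, r₀ < t → (t - r₀) * v t ^ (-(1 / p₂)) ≤ I := by
    intro t ht
    have h1 : ∫ s in Icc r₀ t, f s ≤ I := by
      refine setIntegral_mono_set hint hnonneg ?_
      exact Filter.Eventually.of_forall fun s hs => hs.1
    have h2 : (v t ^ (-(1 / p₂))) * (volume (Icc r₀ t)).toReal ≤ ∫ s in Icc r₀ t, f s := by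
      refine setIntegral_ge_of_const_le_real measurableSet_Icc (by simp) ?_
        (hint.mono_set Icc_subset_Ici_self)
      intro s hs
      exact Real.rpow_le_rpow_of_nonpos (hpos s hs.1)
        (hmono hs.1 (hs.1.trans hs.2) hs.2) (neg_nonpos.mpr (by positivity))
    have h3 : (volume (Icc r₀ t)).toReal = t - r₀ := by
      rw [Real.volume_Icc, ENNReal.toReal_ofReal (by linarith)]
    rw [h3] at h2
    linarith [h1, h2]
  have hIpos : 0 < I := by
    have := key (r₀ + 1) (by linarith)
    have hv : 0 < v (r₀ + 1) ^ (-(1 / p₂)) :=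
      Real.rpow_pos_of_pos (hpos _ (mem_Ici.mpr (by linarith))) _
    nlinarith
  have hvr₀ : 0 < v r₀ := hpos r₀ (mem_Ici.mpr le_rfl)
  refine ⟨min (v r₀ / (2 * r₀) ^ p₂) ((2 * I)⁻¹ ^ p₂), ?_, ?_⟩
  · refine lt_min (by positivity) (Real.rpow_pos_of_pos (by positivity) _)
  intro t ht
  have ht0 : 0 < t := hr₀.trans ht
  have hvt : 0 < v t := hpos t ht.le
  rcases le_or_gt t (2 * r₀) with hcase | hcase
  · calc min (v r₀ / (2 * r₀) ^ p₂) ((2 * I)⁻¹ ^ p₂) * t ^ p₂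
        ≤ (v r₀ / (2 * r₀) ^ p₂) * (2 * r₀) ^ p₂ := by
          apply mul_le_mul (min_le_left _ _) (Real.rpow_le_rpow ht0.le hcase hp₂.le)
            (by positivity) (by positivity)
      _ = v r₀ := by field_simp
      _ ≤ v t := hmono (mem_Ici.mpr le_rfl) (mem_Ici.mpr ht.le) ht.le
  · -- t ≥ 2r₀
    have hkey := key t ht
    have hw : 0 < v t ^ (1 / p₂) := Real.rpow_pos_of_pos hvt _
    have hneg : v t ^ (-(1 / p₂)) = (v t ^ (1 / p₂))⁻¹ := by
      rw [Real.rpow_neg hvt.le]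
    rw [hneg] at hkey
    have h4 : (t - r₀) / I ≤ v t ^ (1 / p₂) := by
      rw [div_le_iff₀ hIpos]
      calc t - r₀ = ((t - r₀) * (v t ^ (1 / p₂))⁻¹) * v t ^ (1 / p₂) := by
            field_simp
        _ ≤ I * v t ^ (1 / p₂) := mul_le_mul_of_nonneg_right hkey hw.le
        _ = v t ^ (1 / p₂) * I := mul_comm _ _

    have h5 : ((t - r₀) / I) ^ p₂ ≤ v t := by
      have h := Real.rpow_le_rpow (div_nonneg (by linarith) hIpos.le) h4 hp₂.le
      rwa [← Real.rpow_mul hvt.le, one_div, inv_mul_cancel₀ hp₂.ne', Real.rpow_one] at h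
    calc min (v r₀ / (2 * r₀) ^ p₂) ((2 * I)⁻¹ ^ p₂) * t ^ p₂
        ≤ (2 * I)⁻¹ ^ p₂ * t ^ p₂ :=
          mul_le_mul_of_nonneg_right (min_le_right _ _) (by positivity)
      _ = ((2 * I)⁻¹ * t) ^ p₂ := (Real.mul_rpow (by positivity) ht0.le).symm
      _ ≤ ((t - r₀) / I) ^ p₂ := by
          apply Real.rpow_le_rpow (by positivity) ?_ hp₂.le
          
          rw [inv_mul_eq_div, div_le_div_iff₀ (by positivity) hIpos]
          nlinarith
      _ ≤ v t := h5
end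

section
/- Let $(M,\mu)$ be a measure space with ball volumes $v(x,r)$ satisfying the doubling condition, and let $k_t(x,y)\ge0$ be a measurable kernel satisfying the Gaussian upper bound $k_t(x,y)\le C\,v(x,\sqrt{t})^{-1}e^{-c\rho^2(x,y)/t}$, together with the Hölder-type bound $|k_t(x,y)-k_t(x',y)|\le \frac{C}{\sqrt{t}\,v(y,\sqrt{t})^{1-1/p}}$ for fixed $x,x'$ with $\rho(x,x')\le1$ and all $y$ and $t>0$. Then for all $t>0$, $\int_M |k_t(x,y)-k_t(x',y)|\,d\mu(y) \le \frac{C'}{t^{1/4}}\Big[v(x,\sqrt{t})^{\frac{1}{2p}}+v(x',\sqrt{t})^{\frac{1}{2p}}\Big].$ -/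
open MeasureTheory Metric

private lemma annuli_bound {M : Type*} [MetricSpace M] [MeasurableSpace M] [BorelSpace M]
    (μ : Measure M) (Cd D : ℝ) (hCd : 0 < Cd) (hD : 0 < D)
    (hdoub : ∀ (x : M) (r lam : ℝ), 0 < r → 1 ≤ lam →
      μ (ball x (lam * r)) ≤ ENNReal.ofReal (Cd * lam ^ D) * μ (ball x r))
    (N c' : ℝ) (hN : 0 ≤ N) (hc' : 0 < c') :
    ∃ K : ℝ, 0 < K ∧ ∀ (z : M) (s : ℝ), 0 < s →
      ∫⁻ y, ENNReal.ofReal ((1 + dist z y / s) ^ N *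
        Real.exp (-c' * dist z y ^ 2 / s ^ 2)) ∂μ
        ≤ ENNReal.ofReal K * μ (ball z s) := by
  set ρ : ℝ := Real.exp (-c') with hρ
  have hρ0 : 0 < ρ := Real.exp_pos _
  have hρ1 : ρ < 1 := by
    rw [hρ, Real.exp_lt_one_iff]; linarith
  set m : ℕ := ⌈N + D⌉₊ with hm
  set a : ℕ → ℝ := fun j => Cd * ((j : ℝ) + 2) ^ (N + D) * ρ ^ j with ha
  have ha_nonneg : ∀ j, 0 ≤ a j := by
    intro j
    have : (0:ℝ) < ((j:ℝ)+2) ^ (N+D) := Real.rpow_pos_of_pos (by positivity) _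
    positivity
  have hsum : Summable a := by
    have h1 : Summable (fun n : ℕ => (n : ℝ) ^ m * ρ ^ n) :=
      summable_pow_mul_geometric_of_norm_lt_one m
        (by rw [Real.norm_eq_abs, abs_of_pos hρ0]; exact hρ1)
    have h2 : Summable (fun j : ℕ => ((j : ℝ) + 2) ^ m * ρ ^ (j + 2)) := by
      have h := (summable_nat_add_iff (f := fun n : ℕ => (n : ℝ) ^ m * ρ ^ n) 2).mpr h1
      refine h.congr fun j => ?_
      push_cast; ring
    have h3 : Summable (fun j : ℕ => ((j : ℝ) + 2) ^ m * ρ ^ j) := by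
      have h := h2.mul_right ((ρ ^ 2)⁻¹)
      refine h.congr fun j => ?_
      field_simp
      ring
    refine Summable.of_nonneg_of_le ha_nonneg (fun j => ?_) (h3.mul_left Cd)
    have hbase : (1:ℝ) ≤ (j:ℝ) + 2 := by
      have : (0:ℝ) ≤ (j:ℝ) := Nat.cast_nonneg j
      linarith
    have hmN : ((j:ℝ)+2) ^ (N+D) ≤ ((j:ℝ)+2) ^ (m:ℝ) :=
      Real.rpow_le_rpow_of_exponent_le hbase (Nat.le_ceil _)
    rw [Real.rpow_natCast] at hmN
    have hρj : (0:ℝ) ≤ ρ ^ j := by positivity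
    calc a j = Cd * ((j:ℝ)+2) ^ (N+D) * ρ ^ j := rfl
      _ ≤ Cd * ((j:ℝ)+2) ^ m * ρ ^ j := by
          apply mul_le_mul_of_nonneg_right _ hρj
          exact mul_le_mul_of_nonneg_left hmN hCd.le
      _ = Cd * (((j:ℝ)+2) ^ m * ρ ^ j) := by ring
  refine ⟨∑' j, a j, ?_, ?_⟩
  · have h0 : a 0 ≤ ∑' j, a j := Summable.le_tsum hsum 0 (fun j _ => ha_nonneg j)
    have ha0 : (0:ℝ) < a 0 := by
      have : (0:ℝ) < ((0:ℝ)+2) ^ (N+D) := Real.rpow_pos_of_pos (by norm_num) _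
      simp only [ha, Nat.cast_zero, pow_zero, mul_one]
      positivity
    linarith
  intro z s hs
  set A : ℕ → Set M := fun j => {y | (j : ℝ) * s ≤ dist z y} ∩ ball z (((j : ℝ) + 1) * s)
    with hA
  have hcover : (Set.univ : Set M) ⊆ ⋃ j, A j := by
    intro y _
    set u : ℝ := dist z y / s with hu
    have hu0 : 0 ≤ u := by positivity
    refine Set.mem_iUnion.mpr ⟨⌊u⌋₊, ?_, ?_⟩
    · show (⌊u⌋₊ : ℝ) * s ≤ dist z y
      have := Nat.floor_le hu0
      calc (⌊u⌋₊ : ℝ) * s ≤ u * s := by nlinarith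
        _ = dist z y := by rw [hu, div_mul_cancel₀ _ hs.ne']
    · exact mem_ball'.mpr ((div_lt_iff₀ hs).mp (Nat.lt_floor_add_one u))
  set f : M → ENNReal := fun y => ENNReal.ofReal ((1 + dist z y / s) ^ N *
    Real.exp (-c' * dist z y ^ 2 / s ^ 2)) with hf
  have step : ∀ j : ℕ, ∫⁻ y in A j, f y ∂μ ≤ ENNReal.ofReal (a j) * μ (ball z s) := by
    intro j
    set bj : ℝ := ((j:ℝ)+2) ^ N * ρ ^ j with hbj
    have hbj0 : 0 ≤ bj := by
      have : (0:ℝ) < ((j:ℝ)+2) ^ N := Real.rpow_pos_of_pos (by positivity) _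
      positivity
    have hfb : ∀ y ∈ A j, f y ≤ ENNReal.ofReal bj := by
      rintro y ⟨h1, h2⟩
      have h1' : (j:ℝ) * s ≤ dist z y := h1
      have h2' : dist z y < ((j:ℝ)+1) * s := mem_ball'.mp h2
      apply ENNReal.ofReal_le_ofReal
      have hd0 : 0 ≤ dist z y := dist_nonneg
      have hfac1 : (1 + dist z y / s) ^ N ≤ ((j:ℝ)+2) ^ N := by
        apply Real.rpow_le_rpow (by positivity) _ hN
        have : dist z y / s < (j:ℝ) + 1 := (div_lt_iff₀ hs).mpr (by linarith)
        linarith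
      have hfac2 : Real.exp (-c' * dist z y ^ 2 / s ^ 2) ≤ ρ ^ j := by
        have hj2 : ((j:ℝ) * s) ^ 2 ≤ dist z y ^ 2 := by
          apply sq_le_sq' _ h1'
          nlinarith
        have hjj : (j:ℝ) ≤ (j:ℝ) ^ 2 := by
          have := Nat.le_self_pow (n := 2) (by norm_num) j
          exact_mod_cast this
        have key : -c' * dist z y ^ 2 / s ^ 2 ≤ (j:ℝ) * (-c') := by
          rw [div_le_iff₀ (by positivity)]
          have e1 : (j:ℝ)^2 * s^2 ≤ dist z y ^ 2 := by nlinarith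
          have e2 : c' * ((j:ℝ) * s^2) ≤ c' * ((j:ℝ)^2 * s^2) :=
            mul_le_mul_of_nonneg_left (mul_le_mul_of_nonneg_right hjj (sq_nonneg s)) hc'.le
          nlinarith
        calc Real.exp (-c' * dist z y ^ 2 / s ^ 2) ≤ Real.exp ((j:ℝ) * (-c')) :=
              Real.exp_le_exp.mpr key
          _ = ρ ^ j := Real.exp_nat_mul _ j
      exact mul_le_mul hfac1 hfac2 (Real.exp_pos _).le
        (Real.rpow_pos_of_pos (by positivity) _).le
    have hlam : (1:ℝ) ≤ (j:ℝ) + 1 := by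
      have : (0:ℝ) ≤ (j:ℝ) := Nat.cast_nonneg j
      linarith
    calc ∫⁻ y in A j, f y ∂μ ≤ ∫⁻ _ in A j, ENNReal.ofReal bj ∂μ :=
          setLIntegral_mono measurable_const hfb
      _ = ENNReal.ofReal bj * μ (A j) := setLIntegral_const _ _
      _ ≤ ENNReal.ofReal bj * μ (ball z (((j:ℝ)+1) * s)) :=
          mul_le_mul_right (measure_mono Set.inter_subset_right) _
      _ ≤ ENNReal.ofReal bj * (ENNReal.ofReal (Cd * ((j:ℝ)+1) ^ D) * μ (ball z s)) :=
          mul_le_mul_right (hdoub z s ((j:ℝ)+1) hs hlam) _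
      _ = ENNReal.ofReal (bj * (Cd * ((j:ℝ)+1) ^ D)) * μ (ball z s) := by
          rw [← mul_assoc, ← ENNReal.ofReal_mul hbj0]
      _ ≤ ENNReal.ofReal (a j) * μ (ball z s) := by
          apply mul_le_mul_left
          apply ENNReal.ofReal_le_ofReal
          have hD1 : ((j:ℝ)+1) ^ D ≤ ((j:ℝ)+2) ^ D :=
            Real.rpow_le_rpow (by positivity) (by linarith) hD.le
          have hmul : ((j:ℝ)+2) ^ N * ((j:ℝ)+2) ^ D = ((j:ℝ)+2) ^ (N + D) :=
            (Real.rpow_add (by positivity) _ _).symm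
          have hρj : (0:ℝ) ≤ ρ ^ j := by positivity
          have hNpos : (0:ℝ) ≤ ((j:ℝ)+2) ^ N := (Real.rpow_pos_of_pos (by positivity) _).le
          calc bj * (Cd * ((j:ℝ)+1) ^ D) = ((j:ℝ)+2) ^ N * ((j:ℝ)+1) ^ D * Cd * ρ ^ j := by
                rw [hbj]; ring
            _ ≤ ((j:ℝ)+2) ^ N * ((j:ℝ)+2) ^ D * Cd * ρ ^ j := by
                apply mul_le_mul_of_nonneg_right _ hρj
                apply mul_le_mul_of_nonneg_right _ hCd.le
                exact mul_le_mul_of_nonneg_left hD1 hNpos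
            _ = a j := by rw [ha]; simp only [← hmul]; ring
  show ∫⁻ y, f y ∂μ ≤ ENNReal.ofReal (∑' j, a j) * μ (ball z s)
  calc ∫⁻ y, f y ∂μ = ∫⁻ y in Set.univ, f y ∂μ := (setLIntegral_univ f).symm
    _ ≤ ∫⁻ y in ⋃ j, A j, f y ∂μ := lintegral_mono_set hcover
    _ ≤ ∑' j, ∫⁻ y in A j, f y ∂μ := lintegral_iUnion_le A f
    _ ≤ ∑' j, ENNReal.ofReal (a j) * μ (ball z s) := ENNReal.tsum_le_tsum step
    _ = (∑' j, ENNReal.ofReal (a j)) * μ (ball z s) := ENNReal.tsum_mul_right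
    _ = ENNReal.ofReal (∑' j, a j) * μ (ball z s) := by
        rw [ENNReal.ofReal_tsum_of_nonneg ha_nonneg hsum]

private lemma sqrt_add_le' (a b : ℝ) (ha : 0 ≤ a) (hb : 0 ≤ b) :
    Real.sqrt (a + b) ≤ Real.sqrt a + Real.sqrt b := by
  have h1 := Real.sq_sqrt ha
  have h2 := Real.sq_sqrt hb
  have h3 := mul_nonneg (Real.sqrt_nonneg a) (Real.sqrt_nonneg b)
  have h : a + b ≤ (Real.sqrt a + Real.sqrt b) ^ 2 := by nlinarith
  calc Real.sqrt (a + b) ≤ Real.sqrt ((Real.sqrt a + Real.sqrt b) ^ 2) := Real.sqrt_le_sqrt h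
    _ = _ := Real.sqrt_sq (by positivity)

private lemma sqrt_exp' (u : ℝ) : Real.sqrt (Real.exp u) = Real.exp (u / 2) := by
  rw [show Real.exp u = Real.exp (u / 2) ^ 2 by rw [sq, ← Real.exp_add]; ring_nf]
  exact Real.sqrt_sq (Real.exp_pos _).le

/-- From the Gaussian upper bound and the Hölder-type bound
`|k_t(x,y) - k_t(x',y)| ≤ C / (√t v(y,√t)^{1-1/p})`, one deduces
`∫ |k_t(x,·) - k_t(x',·)| dμ ≤ C' t^{-1/4} (v(x,√t)^{1/2p} + v(x',√t)^{1/2p})`. -/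
theorem stmt_14 {M : Type*} [MetricSpace M] [MeasurableSpace M] [BorelSpace M]
    (μ : Measure M)
    (Cd D : ℝ) (hCd : 0 < Cd) (hD : 0 < D)
    (hdoub : ∀ (x : M) (r lam : ℝ), 0 < r → 1 ≤ lam →
      μ (ball x (lam * r)) ≤ ENNReal.ofReal (Cd * lam ^ D) * μ (ball x r))
    (hball : ∀ (x : M) (r : ℝ), 0 < r → 0 < μ (ball x r) ∧ μ (ball x r) < ⊤)
    (k : ℝ → M → M → ℝ)
    (hk0 : ∀ (t : ℝ) (x y : M), 0 < t → 0 ≤ k t x y)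
    (hkmeas : ∀ (t : ℝ) (x : M), Measurable (k t x))
    (C c p : ℝ) (hC : 0 < C) (hc : 0 < c) (hp : 2 < p)
    (hGauss : ∀ (t : ℝ) (x y : M), 0 < t →
      k t x y ≤ C / (μ (ball x (Real.sqrt t))).toReal *
        Real.exp (-c * dist x y ^ 2 / t))
    (x x' : M) (hxx' : dist x x' ≤ 1)
    (hHolder : ∀ (y : M) (t : ℝ), 0 < t →
      |k t x y - k t x' y| ≤
        C / (Real.sqrt t * ((μ (ball y (Real.sqrt t))).toReal ^ (1 - 1 / p)))) :
    ∃ C' : ℝ, 0 < C' ∧ ∀ t : ℝ, 0 < t →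
      ∫ y, |k t x y - k t x' y| ∂μ
        ≤ C' / t ^ ((1 : ℝ) / 4) *
            (((μ (ball x (Real.sqrt t))).toReal) ^ (1 / (2 * p)) +
              ((μ (ball x' (Real.sqrt t))).toReal) ^ (1 / (2 * p))) := by
  have hp0 : (0:ℝ) < p := by linarith
  set α : ℝ := 1/2 - 1/(2*p) with hα
  have h2p : (0:ℝ) < 1/(2*p) := by positivity
  have hα0 : 0 < α := by
    rw [hα]
    have h12 : 1/(2*p) < 1/2 := by
      rw [div_lt_div_iff₀ (by positivity) (by norm_num)]
      linarith
    linarith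
  obtain ⟨K, hK0, hK⟩ := annuli_bound μ Cd D hCd hD hdoub (D*α) (c/2)
    (by positivity) (by linarith)
  refine ⟨C * Cd ^ α * K, by positivity, ?_⟩
  intro t ht
  set s : ℝ := Real.sqrt t with hsdef
  have hs0 : 0 < s := Real.sqrt_pos.mpr ht
  have hs2 : s ^ 2 = t := Real.sq_sqrt ht.le
  have ht40 : (0:ℝ) < t ^ ((1:ℝ)/4) := Real.rpow_pos_of_pos ht _
  have ht4 : Real.sqrt s = t ^ ((1:ℝ)/4) := by
    rw [hsdef, Real.sqrt_eq_rpow, Real.sqrt_eq_rpow, ← Real.rpow_mul ht.le]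
    norm_num
  have hVpos : ∀ z : M, 0 < (μ (ball z s)).toReal := fun z =>
    ENNReal.toReal_pos (hball z s hs0).1.ne' (hball z s hs0).2.ne
  have hVne : ∀ z : M, μ (ball z s) ≠ ⊤ := fun z => (hball z s hs0).2.ne
  set b : M → M → ℝ := fun z y => (1 + dist z y / s) ^ (D*α) *
    Real.exp (-(c/2) * dist z y ^ 2 / s ^ 2) with hb
  set cz : M → ℝ := fun z =>
    C * Cd ^ α * (μ (ball z s)).toReal ^ (-α - 1/2) / t ^ ((1:ℝ)/4) with hcz
  have hb_pos : ∀ z y : M, 0 < b z y := by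
    intro z y
    have h1 : (0:ℝ) < (1 + dist z y / s) ^ (D*α) :=
      Real.rpow_pos_of_pos (by positivity) _
    have h2 := Real.exp_pos (-(c/2) * dist z y ^ 2 / s ^ 2)
    rw [hb]
    positivity
  have hcz_pos : ∀ z : M, 0 < cz z := by
    intro z
    have h1 : (0:ℝ) < (μ (ball z s)).toReal ^ (-α - 1/2) :=
      Real.rpow_pos_of_pos (hVpos z) _
    have h2 : (0:ℝ) < Cd ^ α := Real.rpow_pos_of_pos hCd _
    rw [hcz]
    positivity
  -- kernel bound per center
  have hker : ∀ z y : M,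
      Real.sqrt (C / (s * (μ (ball y s)).toReal ^ (2*α))) * Real.sqrt (k t z y)
        ≤ cz z * b z y := by
    intro z y
    have hVy := hVpos y
    have hVz := hVpos z
    set Vy : ℝ := (μ (ball y s)).toReal with hVydef
    set Vz : ℝ := (μ (ball z s)).toReal with hVzdef
    set lam : ℝ := 1 + dist z y / s with hlam
    have hlam1 : (1:ℝ) ≤ lam := by
      rw [hlam]
      have : (0:ℝ) ≤ dist z y / s := by positivity
      linarith
    have hlam0 : (0:ℝ) ≤ lam := by linarith
    -- doubling comparison
    have hdb : Vz ≤ Cd * lam ^ D * Vy := by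
      have hsub : ball z s ⊆ ball y (lam * s) := by
        intro w hw
        rw [mem_ball] at hw ⊢
        have hls : lam * s = s + dist z y := by
          rw [hlam]; field_simp
        calc dist w y ≤ dist w z + dist z y := dist_triangle _ _ _
          _ < s + dist z y := by linarith
          _ = lam * s := hls.symm
      have h1 : μ (ball z s) ≤ μ (ball y (lam * s)) := measure_mono hsub
      have h3 : μ (ball z s) ≤ ENNReal.ofReal (Cd * lam ^ D) * μ (ball y s) :=
        h1.trans (hdoub y s lam hs0 hlam1)
      have hfin : ENNReal.ofReal (Cd * lam ^ D) * μ (ball y s) ≠ ⊤ :=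
        ENNReal.mul_ne_top ENNReal.ofReal_ne_top (hVne y)
      have h4 := ENNReal.toReal_mono hfin h3
      have hlD : (0:ℝ) ≤ Cd * lam ^ D := by
        have := Real.rpow_nonneg hlam0 D
        positivity
      rwa [ENNReal.toReal_mul, ENNReal.toReal_ofReal hlD] at h4
    have hrpow : Vz ^ α ≤ Cd ^ α * lam ^ (D*α) * Vy ^ α := by
      have hlDnn : (0:ℝ) ≤ lam ^ D := Real.rpow_nonneg hlam0 D
      calc Vz ^ α ≤ (Cd * lam ^ D * Vy) ^ α := Real.rpow_le_rpow hVz.le hdb hα0.le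
        _ = Cd ^ α * lam ^ (D*α) * Vy ^ α := by
            rw [Real.mul_rpow (by positivity) hVy.le, Real.mul_rpow hCd.le hlDnn,
              ← Real.rpow_mul hlam0]
    have key : (1:ℝ) / (Vy ^ α) ≤ Cd ^ α * lam ^ (D*α) / Vz ^ α := by
      rw [div_le_div_iff₀ (Real.rpow_pos_of_pos hVy _) (Real.rpow_pos_of_pos hVz _),
        one_mul]
      exact hrpow
    -- sqrt computations
    have hH : Real.sqrt (C / (s * Vy ^ (2*α)))
        = Real.sqrt C / (t ^ ((1:ℝ)/4) * Vy ^ α) := by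
      have e : Real.sqrt (Vy ^ (2*α)) = Vy ^ α := by
        rw [Real.sqrt_eq_rpow, ← Real.rpow_mul hVy.le]
        congr 1
        ring
      rw [Real.sqrt_div hC.le, Real.sqrt_mul hs0.le, ht4, e]
    have hG : Real.sqrt (C / Vz * Real.exp (-c * dist z y ^ 2 / t))
        = Real.sqrt C / Real.sqrt Vz * Real.exp (-(c/2) * dist z y ^ 2 / s ^ 2) := by
      rw [Real.sqrt_mul (by positivity), Real.sqrt_div hC.le, sqrt_exp']
      congr 2
      rw [← hs2]
      ring
    have hkb : Real.sqrt (k t z y)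
        ≤ Real.sqrt C / Real.sqrt Vz * Real.exp (-(c/2) * dist z y ^ 2 / s ^ 2) := by
      rw [← hG]
      exact Real.sqrt_le_sqrt (hGauss t z y ht)
    have hVzsplit : Vz ^ (-α - 1/2) = (Vz ^ α)⁻¹ * (Real.sqrt Vz)⁻¹ := by
      rw [show -α - 1/2 = (-α) + (-(1/2)) by ring, Real.rpow_add hVz,
        Real.rpow_neg hVz.le, Real.rpow_neg hVz.le, Real.sqrt_eq_rpow]
    have hE := Real.exp_pos (-(c/2) * dist z y ^ 2 / s ^ 2)
    have hsqVz : (0:ℝ) < Real.sqrt Vz := Real.sqrt_pos.mpr hVz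
    have hVyα : (0:ℝ) < Vy ^ α := Real.rpow_pos_of_pos hVy _
    have hVzα : (0:ℝ) < Vz ^ α := Real.rpow_pos_of_pos hVz _
    calc Real.sqrt (C / (s * Vy ^ (2*α))) * Real.sqrt (k t z y)
        ≤ (Real.sqrt C / (t ^ ((1:ℝ)/4) * Vy ^ α)) *
            (Real.sqrt C / Real.sqrt Vz * Real.exp (-(c/2) * dist z y ^ 2 / s ^ 2)) := by
          rw [hH]
          exact mul_le_mul_of_nonneg_left hkb (by positivity)
      _ = (Real.sqrt C * Real.sqrt C / (t ^ ((1:ℝ)/4) * Real.sqrt Vz) *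
            Real.exp (-(c/2) * dist z y ^ 2 / s ^ 2)) * (1 / Vy ^ α) := by
          ring
      _ ≤ (Real.sqrt C * Real.sqrt C / (t ^ ((1:ℝ)/4) * Real.sqrt Vz) *
            Real.exp (-(c/2) * dist z y ^ 2 / s ^ 2)) *
            (Cd ^ α * lam ^ (D*α) / Vz ^ α) := by
          apply mul_le_mul_of_nonneg_left key (by positivity)
      _ = cz z * b z y := by
          rw [hcz, hb]
          simp only [← hVzdef, ← hlam]
          rw [hVzsplit, Real.mul_self_sqrt hC.le]
          field_simp
  -- pointwise bound
  have hpoint : ∀ y, |k t x y - k t x' y| ≤ cz x * b x y + cz x' * b x' y := by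
    intro y
    have hkx := hk0 t x y ht
    have hkx' := hk0 t x' y ht
    have h1 : |k t x y - k t x' y| ≤ k t x y + k t x' y :=
      abs_sub_le_iff.mpr ⟨by linarith, by linarith⟩
    have hH := hHolder y t ht
    have hexp : (1:ℝ) - 1/p = 2*α := by rw [hα]; ring
    rw [hexp] at hH
    have hd0 : (0:ℝ) ≤ |k t x y - k t x' y| := abs_nonneg _
    calc |k t x y - k t x' y|
        = Real.sqrt |k t x y - k t x' y| * Real.sqrt |k t x y - k t x' y| :=
          (Real.mul_self_sqrt hd0).symm
      _ ≤ Real.sqrt (C / (s * (μ (ball y s)).toReal ^ (2*α))) *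
            Real.sqrt (k t x y + k t x' y) :=
          mul_le_mul (Real.sqrt_le_sqrt hH) (Real.sqrt_le_sqrt h1)
            (Real.sqrt_nonneg _) (Real.sqrt_nonneg _)
      _ ≤ Real.sqrt (C / (s * (μ (ball y s)).toReal ^ (2*α))) *
            (Real.sqrt (k t x y) + Real.sqrt (k t x' y)) :=
          mul_le_mul_of_nonneg_left (sqrt_add_le' _ _ hkx hkx') (Real.sqrt_nonneg _)
      _ = Real.sqrt (C / (s * (μ (ball y s)).toReal ^ (2*α))) * Real.sqrt (k t x y) +
            Real.sqrt (C / (s * (μ (ball y s)).toReal ^ (2*α))) * Real.sqrt (k t x' y) := by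
          ring
      _ ≤ cz x * b x y + cz x' * b x' y := add_le_add (hker x y) (hker x' y)
  -- measurability
  have habs_meas : Measurable (fun y => |k t x y - k t x' y|) :=
    ((hkmeas t x).sub (hkmeas t x')).abs
  have hbmeas : ∀ z : M, Measurable fun y => ENNReal.ofReal (cz z * b z y) := by
    intro z
    apply Measurable.ennreal_ofReal
    apply Measurable.const_mul
    have hcont : Continuous (b z) := by
      apply Continuous.mul
      · apply Continuous.rpow_const
        · exact continuous_const.add ((continuous_const.dist continuous_id).div_const s)
        · intro y
          right
          positivity
      · exact Real.continuous_exp.comp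
          ((continuous_const.mul ((continuous_const.dist continuous_id).pow 2)).div_const _)
    exact hcont.measurable
  -- lintegral bound per center
  have hone : ∀ z : M, ∫⁻ y, ENNReal.ofReal (cz z * b z y) ∂μ
      ≤ ENNReal.ofReal (cz z * K * (μ (ball z s)).toReal) := by
    intro z
    have hcz0 : 0 ≤ cz z := (hcz_pos z).le
    calc ∫⁻ y, ENNReal.ofReal (cz z * b z y) ∂μ
        = ∫⁻ y, ENNReal.ofReal (cz z) * ENNReal.ofReal (b z y) ∂μ := by
          simp_rw [ENNReal.ofReal_mul hcz0]
      _ = ENNReal.ofReal (cz z) * ∫⁻ y, ENNReal.ofReal (b z y) ∂μ :=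
          lintegral_const_mul' _ _ ENNReal.ofReal_ne_top
      _ ≤ ENNReal.ofReal (cz z) * (ENNReal.ofReal K * μ (ball z s)) :=
          mul_le_mul_right (hK z s hs0) _
      _ = ENNReal.ofReal (cz z * K * (μ (ball z s)).toReal) := by
          rw [← ENNReal.ofReal_toReal (hVne z), ← ENNReal.ofReal_mul hK0.le,
            ← ENNReal.ofReal_mul hcz0, ENNReal.ofReal_toReal (hVne z)]
          rw [← ENNReal.ofReal_toReal (hVne z)]
          congr 1
          ring
  -- combine
  have hlint : ∫⁻ y, ENNReal.ofReal |k t x y - k t x' y| ∂μ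
      ≤ ENNReal.ofReal (cz x * K * (μ (ball x s)).toReal +
          cz x' * K * (μ (ball x' s)).toReal) := by
    calc ∫⁻ y, ENNReal.ofReal |k t x y - k t x' y| ∂μ
        ≤ ∫⁻ y, (ENNReal.ofReal (cz x * b x y) + ENNReal.ofReal (cz x' * b x' y)) ∂μ := by
          apply lintegral_mono
          intro y
          calc ENNReal.ofReal |k t x y - k t x' y|
              ≤ ENNReal.ofReal (cz x * b x y + cz x' * b x' y) :=
                ENNReal.ofReal_le_ofReal (hpoint y)
            _ = _ := ENNReal.ofReal_add
                (mul_nonneg (hcz_pos x).le (hb_pos x y).le)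
                (mul_nonneg (hcz_pos x').le (hb_pos x' y).le)
      _ = (∫⁻ y, ENNReal.ofReal (cz x * b x y) ∂μ) +
            ∫⁻ y, ENNReal.ofReal (cz x' * b x' y) ∂μ :=
          lintegral_add_left (hbmeas x) _
      _ ≤ ENNReal.ofReal (cz x * K * (μ (ball x s)).toReal) +
            ENNReal.ofReal (cz x' * K * (μ (ball x' s)).toReal) :=
          add_le_add (hone x) (hone x')
      _ = _ := (ENNReal.ofReal_add
          (by positivity)
          (by positivity)).symm
  have hint : ∫ y, |k t x y - k t x' y| ∂μ
      = (∫⁻ y, ENNReal.ofReal |k t x y - k t x' y| ∂μ).toReal :=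
    integral_eq_lintegral_of_nonneg_ae
      (Filter.Eventually.of_forall fun y => abs_nonneg _)
      habs_meas.aestronglyMeasurable
  have hcompute : ∀ z : M, cz z * K * (μ (ball z s)).toReal
      = C * Cd ^ α * K / t ^ ((1:ℝ)/4) * (μ (ball z s)).toReal ^ (1/(2*p)) := by
    intro z
    have hVz := hVpos z
    have e1 : (μ (ball z s)).toReal ^ (-α - 1/2) * (μ (ball z s)).toReal
        = (μ (ball z s)).toReal ^ (1/(2*p)) := by
      rw [← Real.rpow_add_one hVz.ne']
      congr 1
      rw [hα]; ring
    calc cz z * K * (μ (ball z s)).toReal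
        = C * Cd ^ α * K / t ^ ((1:ℝ)/4) *
            ((μ (ball z s)).toReal ^ (-α - 1/2) * (μ (ball z s)).toReal) := by
          rw [hcz]; ring
      _ = _ := by rw [e1]
  rw [hint]
  have hrhs0 : (0:ℝ) ≤ cz x * K * (μ (ball x s)).toReal +
      cz x' * K * (μ (ball x' s)).toReal := by positivity
  calc (∫⁻ y, ENNReal.ofReal |k t x y - k t x' y| ∂μ).toReal
      ≤ cz x * K * (μ (ball x s)).toReal + cz x' * K * (μ (ball x' s)).toReal :=
        ENNReal.toReal_le_of_le_ofReal hrhs0 hlint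
    _ = C * Cd ^ α * K / t ^ ((1:ℝ)/4) *
          ((μ (ball x s)).toReal ^ (1/(2*p)) + (μ (ball x' s)).toReal ^ (1/(2*p))) := by
        rw [hcompute x, hcompute x']
        ring
end
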